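/- Let X be a path connected, locally path connected and semilocally simply connected topological space and fix x ∈ X. Then the isotropy group π₁(X,x) = {a ∈ Π₁(X) : r(a) = x and s(a) = x} (the set of path-homotopy classes of loops based at x) is a discrete subspace of Π₁(X) with the CO' topology. -/

import Mathlib

open unitInterval

noncomputable section

variable {X : Type*} [TopologicalSpace X]

/-- The path-homotopy (homotopy relative to `{0,1}`) relation on `C(I, X)`. -/
def pRel (f g : C(I, X)) : Prop := f.HomotopicRel g {0, 1}

/-- The path-homotopy setoid on `C(I, X)`. -/
def pSetoid (X : Type*) [TopologicalSpace X] : Setoid C(I, X) :=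
  ⟨pRel, ContinuousMap.HomotopicRel.equivalence⟩

/-- The fundamental groupoid `Π₁(X)` as the quotient of the path space `P(X) = C(I, X)`
(with the compact-open topology) by path homotopy; it carries the quotient (CO') topology. -/
abbrev Pi1 (X : Type*) [TopologicalSpace X] := Quotient (pSetoid X)

/-- The quotient map `q : P(X) → Π₁(X)`. -/
def pq : C(I, X) → Pi1 X := Quotient.mk (pSetoid X)

theorem pRel.endpts {f g : C(I, X)} (h : pRel f g) {t : I} (ht : t ∈ ({0, 1} : Set I)) :
    f t = g t := h.some.fst_eq_snd ht

/-- The source map `s : Π₁(X) → X`, `[γ] ↦ γ(0)`. -/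
def srcMap : Pi1 X → X :=
  Quotient.lift (fun f : C(I, X) => f 0) fun _ _ h =>
    pRel.endpts h (by simp)

/-- The range map `r : Π₁(X) → X`, `[γ] ↦ γ(1)`. -/
def rngMap : Pi1 X → X :=
  Quotient.lift (fun f : C(I, X) => f 1) fun _ _ h =>
    pRel.endpts h (by simp)

/-- A continuous map `I → X` regarded as a `Path` between its endpoints. -/
def toPath (f : C(I, X)) : Path (f 0) (f 1) := ⟨f, rfl, rfl⟩

/-- Concatenation `α ⧠ β` of paths: traverse `β` first and then `α`
(given `β 1 = α 0`). -/
def concat (α β : C(I, X)) (h : β 1 = α 0) : C(I, X) :=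
  ((toPath β).trans ((toPath α).cast h rfl)).toContinuousMap

@[simp] theorem concat_zero (α β : C(I, X)) (h : β 1 = α 0) : concat α β h 0 = β 0 :=
  ((toPath β).trans ((toPath α).cast h rfl)).source

@[simp] theorem concat_one (α β : C(I, X)) (h : β 1 = α 0) : concat α β h 1 = α 1 :=
  ((toPath β).trans ((toPath α).cast h rfl)).target

/-- The set `N([γ], U, V) = {[δ ⧠ γ ⧠ θ] : δ a path in U with δ 0 = γ 1,
θ a path in V with θ 1 = γ 0}` in `Π₁(X)`. -/
def Nhd (a : Pi1 X) (U V : Set X) : Set (Pi1 X) :=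
  { b | ∃ (γ δ θ : C(I, X)) (h₁ : θ 1 = γ 0) (h₂ : γ 1 = δ 0),
      pq γ = a ∧ Set.range δ ⊆ U ∧ Set.range θ ⊆ V ∧
      b = pq (concat δ (concat γ θ h₁) ((concat_one γ θ h₁).trans h₂)) }

/-- A subset `U ⊆ X` is relatively inessential in `X` if every loop in `U` is
null-homotopic (path-homotopic to a constant path) in `X`. -/
def RelInessential (X : Type*) [TopologicalSpace X] (U : Set X) : Prop :=
  ∀ γ : C(I, X), Set.range γ ⊆ U → γ 1 = γ 0 →
    pRel γ (ContinuousMap.const I (γ 0))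

/-- `X` is semilocally simply connected if every point has a relatively inessential
open neighbourhood. -/
def SemilocSimplyConnected (X : Type*) [TopologicalSpace X] : Prop :=
  ∀ x : X, ∃ U : Set X, IsOpen U ∧ x ∈ U ∧ RelInessential X U


/-!
For a loop class `b` at `x` and a relatively inessential open `U ∋ x`, the set `N(b, U, U)`
meets `π₁(X, x)` only in `b`: an element of it with the same endpoints as `b` differs from `b`
by two loops in `U`, which are null-homotopic in `X`.

The work is in showing that the sets `N(a, U, V)` are open in the CO' topology. A path `f` close
to `β` follows `β` through a chain of relatively inessential open sets `U₀, …, Uₙ₋₁` along a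
partition `0 = t₀ ≤ … ≤ tₙ = 1`. Joining `β(tₖ)` to `f(tₖ)` by paths `ηₖ` in small path-connected
neighbourhoods, each square `ηₖ · f|[tₖ, tₖ₊₁]` versus `β|[tₖ, tₖ₊₁] · ηₖ₊₁` lies in `Uₖ` and so
commutes up to homotopy; composing the squares gives `f ∼ η₀⁻¹ · β · ηₙ`.
-/

open Set Filter Topology Path.Homotopic.Quotient

def Path.toPi1 {x y : X} (p : Path x y) : Pi1 X := pq p.toContinuousMap

namespace Path

variable {x y : X}

theorem toPi1_eq_toPi1_iff {p q : Path x y} : p.toPi1 = q.toPi1 ↔ p.Homotopic q :=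
  Quotient.eq

@[simp] theorem srcMap_toPi1 (p : Path x y) : srcMap p.toPi1 = x := p.source

@[simp] theorem rngMap_toPi1 (p : Path x y) : rngMap p.toPi1 = y := p.target

end Path

theorem toPi1_subpath_toPath {t₀ t₁ : I} (f : C(I, X)) (h₀ : t₀ = 0) (h₁ : t₁ = 1) :
    ((toPath f).subpath t₀ t₁).toPi1 = pq f := by
  subst h₀ h₁
  exact congrArg pq (ContinuousMap.ext fun s => congrArg f (Icc.convexComb_zero_one s))

theorem RelInessential.homotopic_refl {U : Set X} (hU : RelInessential X U) {x : X} {p : Path x x}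
    (hp : range p ⊆ U) : p.Homotopic (Path.refl x) := by
  have h := hU p.toContinuousMap (by simpa using hp) (by simp)
  rwa [show p.toContinuousMap 0 = x from p.source] at h

theorem RelInessential.homotopic {U : Set X} (hU : RelInessential X U) {x y : X} {p q : Path x y}
    (hp : range p ⊆ U) (hq : range q ⊆ U) : p.Homotopic q := by
  have hloop := hU.homotopic_refl (p := p.trans q.symm)
    (by simpa [Path.trans_range, Path.symm_range] using And.intro hp hq)
  rw [← eq] at hloop ⊢
  simp only [mk_trans, mk_symm, mk_refl] at hloop
  calc mk p = ((mk p).trans (mk q).symm).trans (mk q) := by simp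
    _ = mk q := by simp [hloop]

section Nhd

variable {a b : Pi1 X} {U V : Set X}

theorem mem_Nhd_iff :
    b ∈ Nhd a U V ↔ ∃ (x₀ y₀ y₁ x₁ : X) (θ : Path x₀ y₀) (γ : Path y₀ y₁) (δ : Path y₁ x₁),
      γ.toPi1 = a ∧ range θ ⊆ V ∧ range δ ⊆ U ∧ b = ((θ.trans γ).trans δ).toPi1 := by
  constructor
  · rintro ⟨γ, δ, θ, h₁, h₂, rfl, hδ, hθ, rfl⟩
    exact ⟨_, _, _, _, (toPath θ).cast rfl h₁.symm, toPath γ, (toPath δ).cast h₂ rfl,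
      rfl, hθ, hδ, rfl⟩
  · rintro ⟨x₀, y₀, y₁, x₁, θ, γ, δ, rfl, hθ, hδ, rfl⟩
    exact ⟨γ, δ, θ, θ.target.trans γ.source.symm, γ.target.trans δ.source.symm,
      rfl, hδ, hθ, rfl⟩

theorem srcMap_mem_and_rngMap_mem_of_mem_Nhd (hb : b ∈ Nhd a U V) :
    srcMap b ∈ V ∧ rngMap b ∈ U := by
  obtain ⟨_, _, _, _, θ, γ, δ, -, hθ, hδ, rfl⟩ := mem_Nhd_iff.1 hb
  exact ⟨by simpa using hθ ⟨0, θ.source⟩, by simpa using hδ ⟨1, δ.target⟩⟩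

theorem mem_Nhd_self (hV : srcMap a ∈ V) (hU : rngMap a ∈ U) : a ∈ Nhd a U V := by
  obtain ⟨f, rfl⟩ : ∃ f, pq f = a := Quotient.exists_rep a
  refine mem_Nhd_iff.2 ⟨_, _, _, _, Path.refl (f 0), toPath f, Path.refl (f 1), rfl,
    by rw [Path.refl_range, singleton_subset_iff]; exact hV,
    by rw [Path.refl_range, singleton_subset_iff]; exact hU,
    (Path.toPi1_eq_toPi1_iff (p := toPath f)).2 ?_⟩
  rw [← eq]
  simp [mk_trans, mk_refl]

theorem Nhd_subset_of_mem (hb : b ∈ Nhd a U V) : Nhd b U V ⊆ Nhd a U V := by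
  obtain ⟨x₀, y₀, y₁, x₁, θ, γ, δ, rfl, hθ, hδ, rfl⟩ := mem_Nhd_iff.1 hb
  intro c hc
  obtain ⟨x₀', y₀', y₁', x₁', θ', γ', δ', hγ', hθ', hδ', rfl⟩ := mem_Nhd_iff.1 hc
  obtain rfl : y₀' = x₀ := by simpa using congrArg srcMap hγ'
  obtain rfl : y₁' = x₁ := by simpa using congrArg rngMap hγ'
  refine mem_Nhd_iff.2 ⟨_, _, _, _, θ'.trans θ, γ, δ.trans δ', rfl, ?_, ?_, ?_⟩
  · rw [Path.trans_range]
    exact union_subset hθ' hθ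
  · rw [Path.trans_range]
    exact union_subset hδ hδ'
  · rw [Path.toPi1_eq_toPi1_iff, ← eq] at hγ' ⊢
    simp [mk_trans, hγ']

theorem eq_of_mem_Nhd (hU : RelInessential X U) (hV : RelInessential X V) (hb : b ∈ Nhd a U V)
    (hs : srcMap b = srcMap a) (hr : rngMap b = rngMap a) : b = a := by
  obtain ⟨x₀, y₀, y₁, x₁, θ, γ, δ, rfl, hθ, hδ, rfl⟩ := mem_Nhd_iff.1 hb
  simp only [Path.srcMap_toPi1, Path.rngMap_toPi1] at hs hr
  subst hs hr
  have hθ' := eq.2 (hV.homotopic_refl hθ)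
  have hδ' := eq.2 (hU.homotopic_refl hδ)
  rw [Path.toPi1_eq_toPi1_iff, ← eq]
  simp [mk_trans, hθ', hδ', mk_refl]

end Nhd

theorem exists_homotopic_subpath_of_chain {a b a' b' : X} (γ : Path a b) (γ' : Path a' b')
    (t : ℕ → I) (U W : ℕ → Set X) (n : ℕ) (hU : ∀ k < n, RelInessential X (U k))
    (hγ : ∀ k < n, MapsTo γ (uIcc (t k) (t (k + 1))) (U k))
    (hγ' : ∀ k < n, MapsTo γ' (uIcc (t k) (t (k + 1))) (U k))
    (hW : ∀ k ≤ n, JoinedIn (W k) (γ (t k)) (γ' (t k)))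
    (hWU : ∀ k < n, W k ⊆ U k ∧ W (k + 1) ⊆ U k) :
    ∃ (η₀ : Path (γ (t 0)) (γ' (t 0))) (η : Path (γ (t n)) (γ' (t n))),
      range η₀ ⊆ W 0 ∧ range η ⊆ W n ∧
      (γ'.subpath (t 0) (t n)).Homotopic ((η₀.symm.trans (γ.subpath (t 0) (t n))).trans η) := by
  induction n with
  | zero =>
    obtain ⟨η, hη⟩ := hW 0 le_rfl
    refine ⟨η, η, range_subset_iff.2 hη, range_subset_iff.2 hη, ?_⟩
    rw [← eq]
    simp [mk_trans, mk_symm, mk_refl]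
  | succ n ih =>
    obtain ⟨η₀, η, hη₀, hη, hhom⟩ := ih (fun k hk => hU k (by omega))
      (fun k hk => hγ k (by omega)) (fun k hk => hγ' k (by omega))
      (fun k hk => hW k (by omega)) (fun k hk => hWU k (by omega))
    obtain ⟨η', hη'⟩ := hW (n + 1) le_rfl
    have hsquare : (η.trans (γ'.subpath (t n) (t (n + 1)))).Homotopic
        ((γ.subpath (t n) (t (n + 1))).trans η') := by
      obtain ⟨hWUn, hWUn'⟩ := hWU n n.lt_succ_self
      refine (hU n n.lt_succ_self).homotopic ?_ ?_ <;>
        simp only [Path.trans_range, Path.range_subpath, union_subset_iff]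
      · exact ⟨hη.trans hWUn, (hγ' n n.lt_succ_self).image_subset⟩
      · exact ⟨(hγ n n.lt_succ_self).image_subset, (range_subset_iff.2 hη').trans hWUn'⟩
    have hsplit {c d : X} (δ : Path c d) : mk (δ.subpath (t 0) (t (n + 1))) =
        (mk (δ.subpath (t 0) (t n))).trans (mk (δ.subpath (t n) (t (n + 1)))) :=
      (eq.2 ⟨.subpathTransSubpath δ _ _ _⟩).symm
    refine ⟨η₀, η', hη₀, range_subset_iff.2 hη', ?_⟩
    rw [← eq] at hsquare hhom ⊢
    simp only [mk_trans, mk_symm] at hsquare hhom ⊢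
    simp only [hsplit, hhom, trans_assoc, hsquare]

theorem SemilocSimplyConnected.exists_relInessential_partition (hX : SemilocSimplyConnected X)
    (β : C(I, X)) :
    ∃ (t : ℕ → I) (n : ℕ) (U : ℕ → Set X), t 0 = 0 ∧ t n = 1 ∧
      ∀ k, IsOpen (U k) ∧ RelInessential X (U k) ∧ MapsTo β (uIcc (t k) (t (k + 1))) (U k) := by
  choose O hO hβO hOi using fun s => hX (β s)
  obtain ⟨t, ht0, ht, ⟨n, htn⟩, htO⟩ := exists_monotone_Icc_subset_open_cover_unitInterval
    (fun s => (hO s).preimage β.continuous) (fun s _ => mem_iUnion.2 ⟨s, hβO s⟩)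
  choose i hi using htO
  refine ⟨t, n, O ∘ i, ht0, htn n le_rfl, fun k => ⟨hO _, hOi _, ?_⟩⟩
  rw [uIcc_of_le (ht k.le_succ)]
  exact hi k

theorem eventually_pq_mem_Nhd [LocallyPathConnectedSpace X] (hX : SemilocSimplyConnected X)
    (β : C(I, X)) {U V : Set X} (hU : U ∈ 𝓝 (β 1)) (hV : V ∈ 𝓝 (β 0)) :
    ∀ᶠ f in 𝓝 β, pq f ∈ Nhd (pq β) U V := by
  obtain ⟨t, n, O, ht0, htn, hO⟩ := hX.exists_relInessential_partition β
  choose hOopen hOi hβO using hO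
  have hW : ∀ k, ∃ W ∈ 𝓝 (β (t k)), IsPathConnected W ∧ W ⊆ O k ∧ W ⊆ O (k - 1) ∧
      (k = 0 → W ⊆ V) ∧ (k = n → W ⊆ U) := by
    intro k
    -- at `k = 0` the truncated `k - 1` is `0`, so `O (k - 1)` is harmless there
    have hB : O k ∩ O (k - 1) ∩ {y | k = 0 → y ∈ V} ∩ {y | k = n → y ∈ U} ∈ 𝓝 (β (t k)) := by
      refine inter_mem (inter_mem (inter_mem ?_ ?_) ?_) ?_
      · exact (hOopen k).mem_nhds (hβO k left_mem_uIcc)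
      · cases k with
        | zero => exact (hOopen 0).mem_nhds (hβO 0 left_mem_uIcc)
        | succ j => exact (hOopen j).mem_nhds (hβO j right_mem_uIcc)
      · rcases eq_or_ne k 0 with rfl | hk
        · simpa [ht0] using hV
        · simp [hk]
      · rcases eq_or_ne k n with rfl | hk
        · simpa [htn] using hU
        · simp [hk]
    obtain ⟨W, ⟨hWn, hWpc⟩, hWB⟩ := (path_connected_basis _).mem_iff.1 hB
    exact ⟨W, hWn, hWpc, fun y hy => (hWB hy).1.1.1, fun y hy => (hWB hy).1.1.2,
      fun h0 y hy => (hWB hy).1.2 h0, fun hn y hy => (hWB hy).2 hn⟩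
  choose W hWn hWpc hWO hWO' hWV hWU using hW
  have hnear : ∀ᶠ f : C(I, X) in 𝓝 β,
      (∀ k ∈ {k | k < n}, MapsTo f (uIcc (t k) (t (k + 1))) (O k)) ∧
      ∀ k ∈ {k | k ≤ n}, f (t k) ∈ W k :=
    ((finite_lt_nat n).eventually_all.2 fun k _ =>
      ContinuousMap.eventually_mapsTo isCompact_uIcc (hOopen k) (hβO k)).and
    ((finite_le_nat n).eventually_all.2 fun k _ =>
      (continuous_eval_const (t k)).continuousAt.preimage_mem_nhds (hWn k))
  filter_upwards [hnear] with f ⟨hfO, hfW⟩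
  obtain ⟨η₀, η, hη₀, hη, hhom⟩ := exists_homotopic_subpath_of_chain (toPath β) (toPath f) t
    O W n (fun k _ => hOi k) (fun k _ => hβO k) hfO
    (fun k hk => (hWpc k).joinedIn _ (mem_of_mem_nhds (hWn k)) _ (hfW k hk))
    (fun k _ => ⟨hWO k, by simpa using hWO' (k + 1)⟩)
  refine mem_Nhd_iff.2 ⟨_, _, _, _, η₀.symm, (toPath β).subpath (t 0) (t n), η,
    toPi1_subpath_toPath β ht0 htn, ?_, hη.trans (hWU n rfl), ?_⟩
  · rw [Path.symm_range]
    exact hη₀.trans (hWV 0 rfl)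
  · rw [← toPi1_subpath_toPath f ht0 htn]
    exact Path.toPi1_eq_toPi1_iff.2 hhom

theorem isOpen_Nhd [LocallyPathConnectedSpace X] (hX : SemilocSimplyConnected X) (a : Pi1 X)
    {U V : Set X} (hU : IsOpen U) (hV : IsOpen V) : IsOpen (Nhd a U V) := by
  refine isOpen_coinduced.2 (isOpen_iff_mem_nhds.2 fun β hβ => ?_)
  obtain ⟨hβ0, hβ1⟩ := srcMap_mem_and_rngMap_mem_of_mem_Nhd hβ
  filter_upwards [eventually_pq_mem_Nhd hX β (hU.mem_nhds hβ1) (hV.mem_nhds hβ0)] with f hf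
  exact Nhd_subset_of_mem hβ hf

theorem stmt8_general {X : Type*} [TopologicalSpace X]
    [LocallyPathConnectedSpace X] (hX : SemilocSimplyConnected X) (x : X) :
    DiscreteTopology { a : Pi1 X // rngMap a = x ∧ srcMap a = x } := by
  refine discreteTopology_iff_isOpen_singleton.2 fun b => ?_
  obtain ⟨U, hUo, hxU, hU⟩ := hX x
  refine isOpen_induced_iff.2 ⟨Nhd b.1 U U, isOpen_Nhd hX b.1 hUo hUo, ?_⟩
  ext c
  simp only [mem_preimage, mem_singleton_iff]
  constructor
  · intro hc
    exact Subtype.ext (eq_of_mem_Nhd hU hU hc (c.2.2.trans b.2.2.symm) (c.2.1.trans b.2.1.symm))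
  · rintro rfl
    exact mem_Nhd_self (by rw [c.2.2]; exact hxU) (by rw [c.2.1]; exact hxU)

/-- For a path connected, locally path connected, semilocally simply connected
`X` and `x ∈ X`, the isotropy group `π₁(X,x) = {a ∈ Π₁(X) : r(a) = x ∧ s(a) = x}` is a
discrete subspace of `Π₁(X)` with the CO' topology. -/
theorem stmt8 {X : Type*} [TopologicalSpace X] [PathConnectedSpace X]
    [LocallyPathConnectedSpace X] (hX : SemilocSimplyConnected X) (x : X) :
    DiscreteTopology { a : Pi1 X // rngMap a = x ∧ srcMap a = x } :=
  stmt8_general hX x
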